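/- Let a₁, a₂, a₃, b₁, b₂, b₃, λ, μ, t be complex numbers with λ ≠ μ, t ≠ 0, b₁ ≠ 0, b₂ ≠ 0, b₃ ≠ 0, and b₁² + b₂² + b₃² = 0. If aᵢ + t·bᵢ and λ·aᵢ + t·μ·bᵢ are all real for i = 1, 2, 3, and λ is real, then a contradiction follows. -/
import Mathlib


theorem stmt_2 (a₁ a₂ a₃ b₁ b₂ b₃ lam mu t : ℂ)
    (hlam : lam.im = 0) (hlm : lam ≠ mu) (ht : t ≠ 0)
    (hb₁ : b₁ ≠ 0) (hb₂ : b₂ ≠ 0) (hb₃ : b₃ ≠ 0)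
    (hsum : b₁^2 + b₂^2 + b₃^2 = 0)
    (h1 : (a₁ + t * b₁).im = 0) (h2 : (a₂ + t * b₂).im = 0) (h3 : (a₃ + t * b₃).im = 0)
    (h4 : (lam * a₁ + t * mu * b₁).im = 0)
    (h5 : (lam * a₂ + t * mu * b₂).im = 0)
    (h6 : (lam * a₃ + t * mu * b₃).im = 0) : False := by
  set c : ℂ := t * (lam - mu) with hc
  have hcne : c ≠ 0 := mul_ne_zero ht (sub_ne_zero.mpr hlm)
  have key : ∀ a b : ℂ, (a + t * b).im = 0 → (lam * a + t * mu * b).im = 0 →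
      (c * b).im = 0 := by
    intro a b ha hb
    have e : c * b = lam * (a + t * b) - (lam * a + t * mu * b) := by ring
    rw [e, Complex.sub_im, hb, Complex.mul_im, hlam, ha]
    ring
  have k1 := key a₁ b₁ h1 h4
  have k2 := key a₂ b₂ h2 h5
  have k3 := key a₃ b₃ h3 h6
  have e1 : c * b₁ = ((c * b₁).re : ℂ) := Complex.ext rfl k1
  have e2 : c * b₂ = ((c * b₂).re : ℂ) := Complex.ext rfl k2
  have e3 : c * b₃ = ((c * b₃).re : ℂ) := Complex.ext rfl k3
  have hsum2 : (c * b₁)^2 + (c * b₂)^2 + (c * b₃)^2 = 0 := by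
    have : c^2 * (b₁^2 + b₂^2 + b₃^2) = 0 := by rw [hsum]; ring
    calc (c * b₁)^2 + (c * b₂)^2 + (c * b₃)^2 = c^2 * (b₁^2 + b₂^2 + b₃^2) := by ring
    _ = 0 := this
  rw [e1, e2, e3] at hsum2
  have hr : ((c * b₁).re)^2 + ((c * b₂).re)^2 + ((c * b₃).re)^2 = 0 := by
    exact_mod_cast hsum2
  have n1 : (c * b₁).re ≠ 0 := by
    intro h; exact mul_ne_zero hcne hb₁ (by rw [e1, h]; simp)
  have n2 : (c * b₂).re ≠ 0 := by
    intro h; exact mul_ne_zero hcne hb₂ (by rw [e2, h]; simp)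
  have n3 : (c * b₃).re ≠ 0 := by
    intro h; exact mul_ne_zero hcne hb₃ (by rw [e3, h]; simp)
  nlinarith [sq_pos_of_ne_zero n1, sq_pos_of_ne_zero n2, sq_pos_of_ne_zero n3]
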